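/- For density matrices ρ₁, ρ₂ on a D-dimensional Hilbert space with ‖ρ₁ - ρ₂‖₁ ≤ 1, the difference of relative entropies of asymmetry satisfies |Γ(ρ₁) - Γ(ρ₂)| ≤ log₂ D · ‖ρ₁ - ρ₂‖₁ + 2·H(‖ρ₁ - ρ₂‖₁ / 2), where H is the binary entropy and ‖·‖₁ the trace norm. -/

import Mathlib

open Matrix
open scoped Kronecker ComplexOrder
open scoped Classical

variable {n : Type*} [Fintype n] [DecidableEq n]

/-- Density matrix predicate -/
def IsDensityMatrix (ρ : Matrix n n ℂ) : Prop := ρ.PosSemidef ∧ ρ.trace = 1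

/-- von Neumann entropy, base 2 -/
noncomputable def vnEntropy (A : Matrix n n ℂ) : ℝ :=
  if h : A.IsHermitian then -∑ i, h.eigenvalues i * Real.logb 2 (h.eigenvalues i) else 0

/-- twirl over a finite group -/
noncomputable def twirl {G : Type*} [Group G] [Fintype G]
    (U : G →* Matrix.unitaryGroup n ℂ) (ρ : Matrix n n ℂ) : Matrix n n ℂ :=
  (Fintype.card G : ℂ)⁻¹ • ∑ g : G, (U g : Matrix n n ℂ) * ρ * star (U g : Matrix n n ℂ)

/-- relative entropy of asymmetry -/
noncomputable def relEntAsym {G : Type*} [Group G] [Fintype G]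
    (U : G →* Matrix.unitaryGroup n ℂ) (ρ : Matrix n n ℂ) : ℝ :=
  vnEntropy (twirl U ρ) - vnEntropy ρ

/-- square root of a PSD matrix (0 otherwise) -/
noncomputable def sqrtPSD (A : Matrix n n ℂ) : Matrix n n ℂ :=
  if h : A.PosSemidef then
    (h.1.eigenvectorUnitary : Matrix n n ℂ) *
      Matrix.diagonal ((↑) ∘ Real.sqrt ∘ h.1.eigenvalues) *
      (star h.1.eigenvectorUnitary : Matrix n n ℂ)
  else 0

/-- trace norm -/
noncomputable def traceNorm (A : Matrix n n ℂ) : ℝ :=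
  (((Matrix.posSemidef_conjTranspose_mul_self A).1.eigenvectorUnitary : Matrix n n ℂ) *
      Matrix.diagonal (fun i => ((Real.sqrt ((Matrix.posSemidef_conjTranspose_mul_self A).1.eigenvalues i) : ℝ) : ℂ)) *
      (star (Matrix.posSemidef_conjTranspose_mul_self A).1.eigenvectorUnitary : Matrix n n ℂ)).trace.re

/-- fidelity F(ρ,σ) = ‖√ρ√σ‖₁ -/
noncomputable def fidelity (ρ σ : Matrix n n ℂ) : ℝ := traceNorm (sqrtPSD ρ * sqrtPSD σ)

/-- binary entropy, base 2 -/
noncomputable def binEntropy2 (x : ℝ) : ℝ := -x * Real.logb 2 x - (1-x) * Real.logb 2 (1-x)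

/-- matrix logarithm (base 2) of a Hermitian matrix -/
noncomputable def matLogb (A : Matrix n n ℂ) : Matrix n n ℂ :=
  if h : A.IsHermitian then
    (h.eigenvectorUnitary : Matrix n n ℂ) *
      Matrix.diagonal (fun i => (Real.logb 2 (h.eigenvalues i) : ℂ)) *
      star (h.eigenvectorUnitary : Matrix n n ℂ)
  else 0

/-- quantum relative entropy, +∞ if support condition fails -/
noncomputable def relEntropy (ρ σ : Matrix n n ℂ) : EReal :=
  if ∀ v : n → ℂ, σ *ᵥ v = 0 → ρ *ᵥ v = 0 then
    (((ρ * (matLogb ρ - matLogb σ)).trace).re : EReal)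
  else ⊤

/-- complete positivity -/
def IsCompletelyPositive {m : Type*} [Fintype m] [DecidableEq m]
    (Φ : Matrix n n ℂ →ₗ[ℂ] Matrix m m ℂ) : Prop :=
  ∀ (k : ℕ) (M : Matrix (Fin k × n) (Fin k × n) ℂ), M.PosSemidef →
    (Matrix.of fun p q : Fin k × m =>
      (Φ (Matrix.of fun a b => M (p.1, a) (q.1, b))) p.2 q.2).PosSemidef

/-- CPTP map -/
def IsQuantumChannel {m : Type*} [Fintype m] [DecidableEq m]
    (Φ : Matrix n n ℂ →ₗ[ℂ] Matrix m m ℂ) : Prop :=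
  IsCompletelyPositive Φ ∧ ∀ A, (Φ A).trace = A.trace

/-- G-covariance of a map between systems with representations U, V -/
def IsCovariant {m : Type*} [Fintype m] [DecidableEq m] {G : Type*} [Group G]
    (U : G →* Matrix.unitaryGroup n ℂ) (V : G →* Matrix.unitaryGroup m ℂ)
    (Φ : Matrix n n ℂ →ₗ[ℂ] Matrix m m ℂ) : Prop :=
  ∀ g A, Φ ((U g : Matrix n n ℂ) * A * star (U g : Matrix n n ℂ))
    = (V g : Matrix m m ℂ) * Φ A * star (V g : Matrix m m ℂ)


/-!
Write `Γ(ρ₁) - Γ(ρ₂) = [S(𝒢 ρ₁) - S(𝒢 ρ₂)] - [S(ρ₁) - S(ρ₂)]` and bound each bracket by the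
Fannes–Audenaert inequality `|S(ρ) - S(σ)| ≤ T log₂ D + h(T)`, `T = ‖ρ - σ‖₁ / 2`. The twirl `𝒢` is
an average of unitary conjugations, so it does not increase the trace norm, and the bound is
monotone in `T ∈ [0, 1/2]`; hence the twirled bracket obeys the same bound as the other one.

The Fannes–Audenaert inequality reduces to the classical one. In an eigenbasis of `ρ` the diagonal
`q` of `σ` is a doubly stochastic image of the spectrum of `σ`, so `S(σ) ≤ H(q)` by concavity, and
`∑ |pᵢ - qᵢ| ≤ ‖ρ - σ‖₁` for the spectrum `p` of `ρ`. Classically, splitting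
`q = min(p, q) + (q - min(p, q))` gives `H(q) ≤ H(p) + T log D + h(T)`.
-/

lemma abs_sign_le_one {α : Type*} [Ring α] [LinearOrder α] [IsStrictOrderedRing α] (x : α) :
    |(SignType.sign x : α)| ≤ 1 := by
  rcases lt_trichotomy x 0 with h | rfl | h <;> simp [*]

section TraceNorm

open scoped MatrixOrder

lemma traceNorm_eq_re_trace_cfcAbs (A : Matrix n n ℂ) : traceNorm A = (CFC.abs A).trace.re := by
  have hA := Matrix.posSemidef_conjTranspose_mul_self A
  rw [traceNorm, CFC.abs, CFC.sqrt_eq_cfc, cfc_nnreal_eq_real _ (star A * A),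
    show star A * A = Aᴴ * A from rfl, hA.1.cfc_eq, Matrix.IsHermitian.cfc,
    Unitary.conjStarAlgAut_apply]
  congr 5
  funext i
  simp [max_eq_left (hA.eigenvalues_nonneg i)]

lemma traceNorm_nonneg (A : Matrix n n ℂ) : 0 ≤ traceNorm A := by
  rw [traceNorm_eq_re_trace_cfcAbs]
  exact Complex.nonneg_iff.mp (CFC.abs_nonneg A).posSemidef.trace_nonneg |>.1

lemma traceNorm_neg (A : Matrix n n ℂ) : traceNorm (-A) = traceNorm A := by
  rw [traceNorm_eq_re_trace_cfcAbs, traceNorm_eq_re_trace_cfcAbs, CFC.abs_neg]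

lemma trace_unitary_mul_diagonal_mul_star {V : Matrix n n ℂ} (hV : V ∈ unitaryGroup n ℂ)
    (d : n → ℂ) : (V * diagonal d * star V).trace = ∑ i, d i := by
  rw [trace_mul_cycle, (Unitary.mem_iff.mp hV).1, one_mul, trace_diagonal]

lemma Matrix.IsHermitian.trace_cfc {A : Matrix n n ℂ} (hA : A.IsHermitian) (f : ℝ → ℝ) :
    (cfc f A).trace = ∑ i, (f (hA.eigenvalues i) : ℂ) := by
  rw [hA.cfc_eq, Matrix.IsHermitian.cfc, Unitary.conjStarAlgAut_apply,
    trace_unitary_mul_diagonal_mul_star hA.eigenvectorUnitary.2]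
  rfl

lemma Matrix.IsHermitian.traceNorm_eq_sum_abs_eigenvalues {A : Matrix n n ℂ}
    (hA : A.IsHermitian) : traceNorm A = ∑ i, |hA.eigenvalues i| := by
  rw [traceNorm_eq_re_trace_cfcAbs, CFC.abs_eq_cfc_norm A hA, hA.trace_cfc, Complex.re_sum]
  simp

lemma mul_diagonal_mul_star_apply_self (Q : Matrix n n ℂ) (d : n → ℂ) (i : n) :
    (Q * diagonal d * star Q) i i = ∑ j, d j * Complex.normSq (Q i j) := by
  rw [mul_apply]
  refine Finset.sum_congr rfl fun j _ => ?_
  rw [mul_diagonal, star_apply, Complex.star_def, mul_right_comm, Complex.mul_conj, mul_comm]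

lemma sum_normSq_row_of_mem_unitaryGroup {Q : Matrix n n ℂ} (hQ : Q ∈ unitaryGroup n ℂ)
    (i : n) : ∑ j, Complex.normSq (Q i j) = 1 := by
  have h := mul_diagonal_mul_star_apply_self Q (fun _ => 1) i
  rw [diagonal_one, mul_one, (Unitary.mem_iff.mp hQ).2, one_apply_eq] at h
  exact_mod_cast (by simpa using h.symm : (∑ j, (Complex.normSq (Q i j) : ℂ)) = 1)

lemma sum_normSq_col_of_mem_unitaryGroup {Q : Matrix n n ℂ} (hQ : Q ∈ unitaryGroup n ℂ)
    (j : n) : ∑ i, Complex.normSq (Q i j) = 1 := by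
  simpa [star_apply, Complex.star_def, Complex.normSq_conj] using
    sum_normSq_row_of_mem_unitaryGroup (Unitary.star_mem hQ) j

lemma abs_re_unitary_mul_diagonal_mul_star_apply_self_le {Q : Matrix n n ℂ}
    (hQ : Q ∈ unitaryGroup n ℂ) {s : n → ℝ} (hs : ∀ j, |s j| ≤ 1) (i : n) :
    |((Q * diagonal (fun j => (s j : ℂ)) * star Q) i i).re| ≤ 1 := by
  rw [mul_diagonal_mul_star_apply_self, Complex.re_sum,
    ← sum_normSq_row_of_mem_unitaryGroup hQ i]
  refine (Finset.abs_sum_le_sum_abs _ _).trans (Finset.sum_le_sum fun j _ => ?_)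
  simp only [← Complex.ofReal_mul, Complex.ofReal_re, abs_mul,
    abs_of_nonneg (Complex.normSq_nonneg _)]
  exact mul_le_of_le_one_left (Complex.normSq_nonneg _) (hs j)

lemma Matrix.IsHermitian.re_trace_mul_unitary_conj_diagonal_le {M V : Matrix n n ℂ}
    (hM : M.IsHermitian) (hV : V ∈ unitaryGroup n ℂ) {s : n → ℝ} (hs : ∀ j, |s j| ≤ 1) :
    (M * (V * diagonal (fun j => (s j : ℂ)) * star V)).trace.re ≤ traceNorm M := by
  set Q := star (hM.eigenvectorUnitary : Matrix n n ℂ) * V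
  have hQ : Q ∈ unitaryGroup n ℂ := mul_mem (Unitary.star_mem hM.eigenvectorUnitary.2) hV
  have htrace : (M * (V * diagonal (fun j => (s j : ℂ)) * star V)).trace =
      (diagonal (RCLike.ofReal ∘ hM.eigenvalues) *
        (Q * diagonal (fun j => (s j : ℂ)) * star Q)).trace := by
    conv_lhs => rw [hM.spectral_theorem, Unitary.conjStarAlgAut_apply]
    rw [Matrix.mul_assoc, Matrix.mul_assoc, trace_mul_comm]
    simp only [Q, StarMul.star_mul, star_star, Matrix.mul_assoc]
  rw [htrace, hM.traceNorm_eq_sum_abs_eigenvalues, trace, Complex.re_sum]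
  refine Finset.sum_le_sum fun i _ => ?_
  rw [diag_apply, diagonal_mul, Function.comp_apply, RCLike.ofReal_eq_complex_ofReal,
    Complex.re_ofReal_mul]
  calc _ ≤ |hM.eigenvalues i| * |((Q * diagonal (fun j => (s j : ℂ)) * star Q) i i).re| := by
        rw [← abs_mul]; exact le_abs_self _
    _ ≤ |hM.eigenvalues i| := mul_le_of_le_one_right (abs_nonneg _)
        (abs_re_unitary_mul_diagonal_mul_star_apply_self_le hQ hs i)

lemma Matrix.IsHermitian.exists_traceNorm_eq_re_trace_mul {A : Matrix n n ℂ}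
    (hA : A.IsHermitian) :
    ∃ V ∈ unitaryGroup n ℂ, ∃ s : n → ℝ, (∀ j, |s j| ≤ 1) ∧
      traceNorm A = (A * (V * diagonal (fun j => (s j : ℂ)) * star V)).trace.re := by
  have hcont : ∀ f : ℝ → ℝ, ContinuousOn f (spectrum ℝ A) := fun f =>
    (Matrix.finite_real_spectrum (A := A)).continuousOn f
  refine ⟨hA.eigenvectorUnitary, hA.eigenvectorUnitary.2,
    fun j => SignType.sign (hA.eigenvalues j), fun j => abs_sign_le_one _, ?_⟩
  have hsign := hA.cfc_eq (fun x => SignType.sign x)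
  rw [Matrix.IsHermitian.cfc, Unitary.conjStarAlgAut_apply] at hsign
  have habs : A * cfc (fun x : ℝ => (SignType.sign x : ℝ)) A = CFC.abs A := by
    conv_lhs => enter [1]; rw [← cfc_id' ℝ A]
    rw [← cfc_mul _ _ A (hcont _) (hcont _), CFC.abs_eq_cfc_norm A hA]
    exact cfc_congr fun x _ => self_mul_sign x
  rw [traceNorm_eq_re_trace_cfcAbs, ← habs, hsign]
  rfl

lemma Matrix.IsHermitian.sum_abs_re_diag_le_traceNorm {A W : Matrix n n ℂ}
    (hA : A.IsHermitian) (hW : W ∈ unitaryGroup n ℂ) :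
    ∑ i, |((star W * A * W) i i).re| ≤ traceNorm A := by
  set s : n → ℝ := fun i => SignType.sign ((star W * A * W) i i).re
  calc ∑ i, |((star W * A * W) i i).re|
      = (A * (W * diagonal (fun j => (s j : ℂ)) * star W)).trace.re := by
        rw [← Matrix.mul_assoc, trace_mul_cycle, ← Matrix.mul_assoc, trace, Complex.re_sum]
        refine Finset.sum_congr rfl fun i _ => ?_
        rw [diag_apply, mul_diagonal, Complex.re_mul_ofReal, self_mul_sign]
    _ ≤ traceNorm A := hA.re_trace_mul_unitary_conj_diagonal_le hW fun j => abs_sign_le_one _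

end TraceNorm

section Twirl

variable {G : Type*} [Group G] [Fintype G] (U : G →* unitaryGroup n ℂ)

lemma twirl_sub (ρ₁ ρ₂ : Matrix n n ℂ) : twirl U ρ₁ - twirl U ρ₂ = twirl U (ρ₁ - ρ₂) := by
  simp only [twirl, ← smul_sub, ← Finset.sum_sub_distrib, Matrix.mul_sub, Matrix.sub_mul]

lemma isHermitian_twirl {Δ : Matrix n n ℂ} (hΔ : Δ.IsHermitian) : (twirl U Δ).IsHermitian :=
  IsSelfAdjoint.smul (by simp [IsSelfAdjoint]) <|
    isSelfAdjoint_sum _ fun g _ => IsSelfAdjoint.conjugate hΔ _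

lemma isDensityMatrix_twirl {ρ : Matrix n n ℂ} (hρ : IsDensityMatrix ρ) :
    IsDensityMatrix (twirl U ρ) := by
  have hconj : ∀ g, ((U g : Matrix n n ℂ) * ρ * star (U g : Matrix n n ℂ)).trace = 1 :=
    fun g => by rw [trace_mul_cycle, Unitary.coe_star_mul_self, one_mul, hρ.2]
  refine ⟨PosSemidef.smul (posSemidef_sum _ fun g _ => ?_) (by positivity), ?_⟩
  · exact hρ.1.mul_mul_conjTranspose_same _
  · rw [twirl, trace_smul, trace_sum, Finset.sum_congr rfl fun g _ => hconj g]
    simp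

lemma traceNorm_twirl_le {Δ : Matrix n n ℂ} (hΔ : Δ.IsHermitian) :
    traceNorm (twirl U Δ) ≤ traceNorm Δ := by
  obtain ⟨V, hV, s, hs, hnorm⟩ := (isHermitian_twirl U hΔ).exists_traceNorm_eq_re_trace_mul
  -- the test matrix `V diag(s) V*` for `twirl U Δ`, conjugated by `U g`, is one for `Δ`
  have hterm : ∀ g, (((U g : Matrix n n ℂ) * Δ * star (U g : Matrix n n ℂ)) *
      (V * diagonal (fun j => (s j : ℂ)) * star V)).trace.re ≤ traceNorm Δ := fun g => by
    have hW : star (U g : Matrix n n ℂ) * V ∈ unitaryGroup n ℂ :=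
      mul_mem (Unitary.star_mem (U g).2) hV
    convert hΔ.re_trace_mul_unitary_conj_diagonal_le hW hs using 2
    simp only [Matrix.mul_assoc]
    rw [trace_mul_comm]
    simp only [StarMul.star_mul, star_star, Matrix.mul_assoc]
  have hcard : (0 : ℝ) < Fintype.card G := by exact_mod_cast Fintype.card_pos
  rw [hnorm, twirl, smul_mul, Finset.sum_mul, trace_smul, trace_sum, smul_eq_mul,
    ← Complex.ofReal_natCast, ← Complex.ofReal_inv, Complex.re_ofReal_mul, Complex.re_sum,
    inv_mul_le_iff₀ hcard]
  calc _ ≤ ∑ _ : G, traceNorm Δ := Finset.sum_le_sum fun g _ => hterm g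
    _ = _ := by simp

end Twirl

section ClassicalFannes

open Real

variable {ι : Type*} [Fintype ι]

lemma negMulLog_add_le {x y : ℝ} (hx : 0 ≤ x) (hy : 0 ≤ y) :
    negMulLog (x + y) ≤ negMulLog x + negMulLog y := by
  have hmono : ∀ {a b : ℝ}, 0 ≤ a → 0 ≤ b → a * log a ≤ a * log (a + b) := fun {a b} ha hb => by
    rcases ha.eq_or_lt with rfl | ha
    · simp
    · exact mul_le_mul_of_nonneg_left (log_le_log ha (by linarith)) ha.le
  have h1 := hmono hx hy
  have h2 := hmono hy hx
  rw [add_comm y] at h2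
  simp only [negMulLog]
  linarith

lemma sum_negMulLog_le_mul_log_card_add (b : ι → ℝ) (hb : ∀ i, 0 ≤ b i) :
    ∑ i, negMulLog (b i) ≤ (∑ i, b i) * log (Fintype.card ι) + negMulLog (∑ i, b i) := by
  rcases isEmpty_or_nonempty ι with hι | hι
  · simp
  have hD : (0 : ℝ) < Fintype.card ι := by exact_mod_cast Fintype.card_pos
  have hjensen := concaveOn_negMulLog.le_map_sum (t := Finset.univ)
    (w := fun _ => (Fintype.card ι : ℝ)⁻¹) (p := b) (fun _ _ => by positivity)
    (by simp [hD.ne']) fun i _ => hb i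
  rw [← Finset.smul_sum, ← Finset.smul_sum, smul_eq_mul, smul_eq_mul, negMulLog_mul,
    show negMulLog (Fintype.card ι : ℝ)⁻¹ = (Fintype.card ι : ℝ)⁻¹ * log (Fintype.card ι) by
      simp [negMulLog, log_inv]] at hjensen
  calc ∑ i, negMulLog (b i)
      = Fintype.card ι * ((Fintype.card ι : ℝ)⁻¹ * ∑ i, negMulLog (b i)) := by field_simp
    _ ≤ _ := mul_le_mul_of_nonneg_left hjensen hD.le
    _ = _ := by field_simp

lemma negMulLog_add_mul_log_le {m p s : ℝ} (hm : 0 ≤ m) (hmp : m ≤ p) (hp : p ≤ 1)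
    (hs : 0 < s) : negMulLog m + m * log s ≤ negMulLog p + s * p - m := by
  rcases hm.eq_or_lt with rfl | hm
  · simpa using add_nonneg (negMulLog_nonneg hmp hp) (mul_nonneg hs.le hmp)
  have hp0 : 0 < p := hm.trans_le hmp
  have hgibbs : m * (log s + log p - log m) ≤ s * p - m := by
    have := mul_le_mul_of_nonneg_left (log_le_sub_one_of_pos (by positivity : 0 < s * p / m))
      hm.le
    rw [log_div (by positivity) hm.ne', log_mul hs.ne' hp0.ne'] at this
    exact this.trans_eq (by field_simp)
  have hlogp : (p - m) * log p ≤ 0 :=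
    mul_nonpos_of_nonneg_of_nonpos (sub_nonneg.mpr hmp) (log_nonpos hp0.le hp)
  simp only [negMulLog]
  linarith

lemma sum_negMulLog_le_of_le {m p : ι → ℝ} (hm : ∀ i, 0 ≤ m i) (hmp : ∀ i, m i ≤ p i)
    (hp : ∑ i, p i = 1) :
    ∑ i, negMulLog (m i) ≤ ∑ i, negMulLog (p i) + negMulLog (∑ i, m i) := by
  have hp1 : ∀ i, p i ≤ 1 := fun i => hp ▸
    Finset.single_le_sum (fun j _ => (hm j).trans (hmp j)) (Finset.mem_univ i)
  rcases (Finset.sum_nonneg fun i _ => hm i).eq_or_lt with hs | hs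
  · have hm0 : ∀ i, m i = 0 := fun i =>
      (Finset.sum_eq_zero_iff_of_nonneg fun j _ => hm j).mp hs.symm i (Finset.mem_univ i)
    simpa [hm0] using
      Finset.sum_nonneg fun i _ => negMulLog_nonneg ((hm i).trans (hmp i)) (hp1 i)
  have := Finset.sum_le_sum fun i (_ : i ∈ Finset.univ) =>
    negMulLog_add_mul_log_le (hm i) (hmp i) (hp1 i) hs
  rw [Finset.sum_add_distrib, Finset.sum_sub_distrib, Finset.sum_add_distrib, ← Finset.sum_mul,
    ← Finset.mul_sum, hp] at this
  simp only [negMulLog] at this ⊢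
  linarith

theorem sum_negMulLog_sub_sum_negMulLog_le {p q : ι → ℝ} (hp : ∀ i, 0 ≤ p i)
    (hp1 : ∑ i, p i = 1) (hq : ∀ i, 0 ≤ q i) (hq1 : ∑ i, q i = 1) :
    ∑ i, negMulLog (q i) - ∑ i, negMulLog (p i) ≤
      (∑ i, |p i - q i|) / 2 * log (Fintype.card ι) + binEntropy ((∑ i, |p i - q i|) / 2) := by
  set m : ι → ℝ := fun i => min (p i) (q i)
  have hm : ∀ i, 0 ≤ m i := fun i => le_min (hp i) (hq i)
  have hmq : ∀ i, m i ≤ q i := fun i => min_le_right _ _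
  have hT : (∑ i, |p i - q i|) / 2 = ∑ i, (q i - m i) := by
    have hpt : ∀ i, q i - m i = (|p i - q i| - (p i - q i)) / 2 := fun i => by
      rcases le_total (p i) (q i) with h | h
      · rw [show m i = p i from min_eq_left h, abs_of_nonpos (sub_nonpos.mpr h)]; ring
      · rw [show m i = q i from min_eq_right h, abs_of_nonneg (sub_nonneg.mpr h)]; ring
    rw [Finset.sum_congr rfl fun i _ => hpt i, ← Finset.sum_div, Finset.sum_sub_distrib,
      Finset.sum_sub_distrib, hp1, hq1, sub_self, sub_zero]
  have hsum_m : ∑ i, m i = 1 - (∑ i, |p i - q i|) / 2 := by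
    rw [hT, Finset.sum_sub_distrib, hq1]; ring
  have hsplit : ∑ i, negMulLog (q i) ≤ ∑ i, negMulLog (m i) + ∑ i, negMulLog (q i - m i) := by
    rw [← Finset.sum_add_distrib]
    exact Finset.sum_le_sum fun i _ => by
      simpa using negMulLog_add_le (hm i) (sub_nonneg.mpr (hmq i))
  have hcommon := sum_negMulLog_le_of_le hm (fun i => min_le_left _ _) hp1
  have hrest := sum_negMulLog_le_mul_log_card_add _ fun i => sub_nonneg.mpr (hmq i)
  rw [hsum_m] at hcommon
  rw [← hT] at hrest
  rw [binEntropy_eq_negMulLog_add_negMulLog_one_sub]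
  linarith

end ClassicalFannes

section Fannes

open Real

lemma Matrix.PosSemidef.sum_negMulLog_eigenvalues_le {σ W : Matrix n n ℂ} (hσ : σ.PosSemidef)
    (hW : W ∈ unitaryGroup n ℂ) :
    ∑ j, negMulLog (hσ.1.eigenvalues j) ≤ ∑ i, negMulLog ((star W * σ * W) i i).re := by
  set Q := star W * (hσ.1.eigenvectorUnitary : Matrix n n ℂ)
  have hQ : Q ∈ unitaryGroup n ℂ := mul_mem (Unitary.star_mem hW) hσ.1.eigenvectorUnitary.2
  have hrepr : star W * σ * W = Q * diagonal (RCLike.ofReal ∘ hσ.1.eigenvalues) * star Q := by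
    conv_lhs => rw [hσ.1.spectral_theorem, Unitary.conjStarAlgAut_apply]
    simp only [Q, StarMul.star_mul, star_star, Matrix.mul_assoc]
  have hdiag : ∀ i, ((star W * σ * W) i i).re =
      ∑ j, Complex.normSq (Q i j) * hσ.1.eigenvalues j :=
    fun i => by simp [hrepr, mul_diagonal_mul_star_apply_self, Complex.re_sum, mul_comm]
  calc ∑ j, negMulLog (hσ.1.eigenvalues j)
      = ∑ i, ∑ j, Complex.normSq (Q i j) * negMulLog (hσ.1.eigenvalues j) := by
        rw [Finset.sum_comm]
        simp only [← Finset.sum_mul, sum_normSq_col_of_mem_unitaryGroup hQ, one_mul]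
    _ ≤ ∑ i, negMulLog ((star W * σ * W) i i).re := Finset.sum_le_sum fun i _ => by
        rw [hdiag]
        exact concaveOn_negMulLog.le_map_sum (fun j _ => Complex.normSq_nonneg _)
          (sum_normSq_row_of_mem_unitaryGroup hQ i) fun j _ => hσ.eigenvalues_nonneg j

lemma IsDensityMatrix.sum_eigenvalues {ρ : Matrix n n ℂ} (hρ : IsDensityMatrix ρ) :
    ∑ i, hρ.1.1.eigenvalues i = 1 := by
  have := hρ.2
  rw [hρ.1.1.trace_eq_sum_eigenvalues] at this
  simpa using congrArg Complex.re this

lemma IsDensityMatrix.star_mul_mul {ρ W : Matrix n n ℂ} (hρ : IsDensityMatrix ρ)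
    (hW : W ∈ unitaryGroup n ℂ) : IsDensityMatrix (star W * ρ * W) :=
  ⟨hρ.1.conjTranspose_mul_mul_same W,
    by rw [trace_mul_cycle, (Unitary.mem_iff.mp hW).2, one_mul, hρ.2]⟩

lemma Matrix.IsHermitian.vnEntropy_eq_sum_negMulLog_div {A : Matrix n n ℂ} (hA : A.IsHermitian) :
    vnEntropy A = (∑ i, negMulLog (hA.eigenvalues i)) / log 2 := by
  rw [vnEntropy, dif_pos hA, Finset.sum_div, ← Finset.sum_neg_distrib]
  exact Finset.sum_congr rfl fun i _ => by rw [logb, negMulLog]; ring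

noncomputable def fannesBound (d : ℕ) (t : ℝ) : ℝ := logb 2 d * t + binEntropy2 t

lemma fannesBound_eq_div_log_two (d : ℕ) (t : ℝ) :
    fannesBound d t = (t * log d + binEntropy t) / log 2 := by
  rw [fannesBound, binEntropy2, binEntropy, log_inv, log_inv, logb, logb, logb]
  ring

lemma fannesBound_monotoneOn (d : ℕ) : MonotoneOn (fannesBound d) (Set.Icc 0 2⁻¹) :=
  fun a ha b hb hab => by
    simp only [fannesBound_eq_div_log_two]
    gcongr
    exact binEntropy_strictMonoOn.monotoneOn ha hb hab

theorem vnEntropy_sub_le {ρ σ : Matrix n n ℂ} (hρ : IsDensityMatrix ρ) (hσ : IsDensityMatrix σ)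
    (h : traceNorm (ρ - σ) ≤ 1) :
    vnEntropy σ - vnEntropy ρ ≤ fannesBound (Fintype.card n) (traceNorm (ρ - σ) / 2) := by
  set W : Matrix n n ℂ := ↑hρ.1.1.eigenvectorUnitary
  have hW : W ∈ unitaryGroup n ℂ := hρ.1.1.eigenvectorUnitary.2
  set p := hρ.1.1.eigenvalues
  set q : n → ℝ := fun i => ((star W * σ * W) i i).re
  have hσW := hσ.star_mul_mul hW
  have hdiff : ∀ i, p i - q i = ((star W * (ρ - σ) * W) i i).re := fun i => by
    have hdiag : star W * ρ * W = diagonal (RCLike.ofReal ∘ p) := by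
      rw [← Unitary.conjStarAlgAut_star_apply (S := ℂ),
        hρ.1.1.conjStarAlgAut_star_eigenvectorUnitary]
    rw [Matrix.mul_sub, Matrix.sub_mul, Matrix.sub_apply, hdiag, Complex.sub_re]
    simp [q]
  have hdist : (∑ i, |p i - q i|) / 2 ≤ traceNorm (ρ - σ) / 2 := by
    gcongr
    simpa only [hdiff] using (hρ.1.1.sub hσ.1.1).sum_abs_re_diag_le_traceNorm hW
  have hclassical := sum_negMulLog_sub_sum_negMulLog_le (p := p) (q := q)
    (fun i => hρ.1.eigenvalues_nonneg i) hρ.sum_eigenvalues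
    (fun i => (Complex.nonneg_iff.mp (hσW.1.diag_nonneg (i := i))).1)
    (by simpa [trace] using congrArg Complex.re hσW.2)
  have hpinch := hσ.1.sum_negMulLog_eigenvalues_le hW
  have hT0 : 0 ≤ traceNorm (ρ - σ) / 2 := div_nonneg (traceNorm_nonneg _) two_pos.le
  have hmono := fannesBound_monotoneOn (Fintype.card n)
    ⟨by positivity, hdist.trans (by linarith)⟩ ⟨hT0, by linarith⟩ hdist
  rw [hρ.1.1.vnEntropy_eq_sum_negMulLog_div, hσ.1.1.vnEntropy_eq_sum_negMulLog_div, ← sub_div]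
  refine le_trans ?_ hmono
  rw [fannesBound_eq_div_log_two]
  exact div_le_div_of_nonneg_right (by linarith) (log_pos one_lt_two).le

theorem abs_vnEntropy_sub_le {ρ σ : Matrix n n ℂ} (hρ : IsDensityMatrix ρ)
    (hσ : IsDensityMatrix σ) (h : traceNorm (ρ - σ) ≤ 1) :
    |vnEntropy ρ - vnEntropy σ| ≤ fannesBound (Fintype.card n) (traceNorm (ρ - σ) / 2) := by
  have hswap : traceNorm (σ - ρ) = traceNorm (ρ - σ) := by rw [← neg_sub, traceNorm_neg]
  have hreverse := vnEntropy_sub_le hσ hρ (by rwa [hswap])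
  rw [hswap] at hreverse
  exact abs_sub_le_iff.mpr ⟨hreverse, vnEntropy_sub_le hρ hσ h⟩

end Fannes

theorem relEntAsym_continuity {n G : Type*} [Fintype n] [DecidableEq n] [Group G] [Fintype G]
    (U : G →* Matrix.unitaryGroup n ℂ) (ρ₁ ρ₂ : Matrix n n ℂ)
    (h₁ : IsDensityMatrix ρ₁) (h₂ : IsDensityMatrix ρ₂)
    (hT : traceNorm (ρ₁ - ρ₂) ≤ 1) :
    |relEntAsym U ρ₁ - relEntAsym U ρ₂|
      ≤ Real.logb 2 (Fintype.card n) * traceNorm (ρ₁ - ρ₂)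
        + 2 * binEntropy2 (traceNorm (ρ₁ - ρ₂) / 2) := by
  have hcontract : traceNorm (twirl U ρ₁ - twirl U ρ₂) ≤ traceNorm (ρ₁ - ρ₂) := by
    rw [twirl_sub]; exact traceNorm_twirl_le U (h₁.1.1.sub h₂.1.1)
  have htwirled := abs_vnEntropy_sub_le (isDensityMatrix_twirl U h₁)
    (isDensityMatrix_twirl U h₂) (hcontract.trans hT)
  have hmono := fannesBound_monotoneOn (Fintype.card n)
    ⟨div_nonneg (traceNorm_nonneg _) two_pos.le, by linarith⟩
    ⟨div_nonneg (traceNorm_nonneg _) two_pos.le, by linarith⟩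
    (div_le_div_of_nonneg_right hcontract two_pos.le)
  calc |relEntAsym U ρ₁ - relEntAsym U ρ₂|
      = |(vnEntropy (twirl U ρ₁) - vnEntropy (twirl U ρ₂)) - (vnEntropy ρ₁ - vnEntropy ρ₂)| := by
        rw [relEntAsym, relEntAsym]; ring_nf
    _ ≤ |vnEntropy (twirl U ρ₁) - vnEntropy (twirl U ρ₂)| + |vnEntropy ρ₁ - vnEntropy ρ₂| :=
        abs_sub _ _
    _ ≤ 2 * fannesBound (Fintype.card n) (traceNorm (ρ₁ - ρ₂) / 2) := by
        linarith [abs_vnEntropy_sub_le h₁ h₂ hT]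
    _ = _ := by rw [fannesBound]; ring
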